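/- arXiv:1909.12863 — 2 statements merged into one kernel-verified Lean document; each statement's English description precedes it below -/
import Mathlib

section
/- Let P = {x ∈ ℝⁿ : Ax = b, Bx ≤ d} be a 0/1 polytope, let c ∈ ℤⁿ, and let x be a vertex of P that does not minimize cᵀx over P. Let αg be a maximal augmentation along a steepest edge at x, i.e., g is an edge-direction at x maximizing −cᵀg/‖g‖₁ among all edge-directions at x, and let α*g* be a greatest-improvement augmentation at x. Then cᵀx − cᵀ(x + αg) ≥ (1/n)·(cᵀx − cᵀ(x + α*g*)). -/
noncomputable section

variable {n mA mB : ℕ}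

/-- The real matrix obtained from an integer matrix. -/
def rmat {m k : Type*} (M : Matrix m k ℤ) : Matrix m k ℝ := M.map (fun z => (z : ℝ))

/-- The real vector obtained from an integer vector. -/
def rvec {m : Type*} (v : m → ℤ) : m → ℝ := fun i => (v i : ℝ)

/-- The feasible region `P = {x : Ax = b, Bx ≤ d}`. -/
def Pset (A : Matrix (Fin mA) (Fin n) ℤ) (B : Matrix (Fin mB) (Fin n) ℤ)
    (b : Fin mA → ℤ) (d : Fin mB → ℤ) : Set (Fin n → ℝ) :=
  {x | (rmat A).mulVec x = rvec b ∧ ∀ i, (rmat B).mulVec x i ≤ (d i : ℝ)}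

/-- `g` is a circuit of the system `Ax = b, Bx ≤ d`:  `g` is a nonzero kernel element of `A`
whose image `Bg` is support-minimal among `{By : y ∈ ker A, y ≠ 0}`. -/
def IsCircuit (A : Matrix (Fin mA) (Fin n) ℤ) (B : Matrix (Fin mB) (Fin n) ℤ)
    (g : Fin n → ℝ) : Prop :=
  g ≠ 0 ∧ (rmat A).mulVec g = 0 ∧
    ∀ y : Fin n → ℝ, y ≠ 0 → (rmat A).mulVec y = 0 →
      ¬ ({i | (rmat B).mulVec y i ≠ 0} ⊂ {i | (rmat B).mulVec g i ≠ 0})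

/-- The set `C(A,B)` of circuits, normalized to have coprime integer components. -/
def CAB (A : Matrix (Fin mA) (Fin n) ℤ) (B : Matrix (Fin mB) (Fin n) ℤ) :
    Set (Fin n → ℝ) :=
  {g | IsCircuit A B g ∧ ∃ gz : Fin n → ℤ, (∀ i, g i = (gz i : ℝ)) ∧
        Finset.univ.gcd (fun i => (gz i).natAbs) = 1}

/-- `cᵀx` for an integer objective `c` and a real point `x`. -/
def dotIC (c : Fin n → ℤ) (x : Fin n → ℝ) : ℝ := ∑ i, (c i : ℝ) * x i

/-- The 1-norm of a vector. -/
def norm1 (x : Fin n → ℝ) : ℝ := ∑ i, |x i|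

/-- `α g` is a maximal augmentation at `x` (within `P`). -/
def IsMaxAug (P : Set (Fin n → ℝ)) (x g : Fin n → ℝ) (α : ℝ) : Prop :=
  0 < α ∧ x + α • g ∈ P ∧ ∀ ε : ℝ, 0 < ε → x + (α + ε) • g ∉ P

/-- `δ`: the largest absolute value of the determinant of an `n × n` submatrix of the
stacked matrix `(A; B)`. -/
def deltaMax (A : Matrix (Fin mA) (Fin n) ℤ) (B : Matrix (Fin mB) (Fin n) ℤ) : ℝ :=
  sSup {r : ℝ | ∃ f : Fin n → (Fin mA ⊕ Fin mB), Function.Injective f ∧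
        r = |((((Matrix.fromRows A B).submatrix f id).det : ℤ) : ℝ)|}

/-- The feasible cone of `P = {Ax = b, Bx ≤ d}` at `x`: directions `z` with `Az = 0` and
`B_T z ≤ 0`, where `T` is the set of rows of `B` tight at `x`. -/
def feasCone (A : Matrix (Fin mA) (Fin n) ℤ) (B : Matrix (Fin mB) (Fin n) ℤ)
    (d : Fin mB → ℤ) (x : Fin n → ℝ) : Set (Fin n → ℝ) :=
  {z | (rmat A).mulVec z = 0 ∧
       ∀ i, (rmat B).mulVec x i = (d i : ℝ) → (rmat B).mulVec z i ≤ 0}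

/-- `g` is an edge-direction at the vertex `x`: it spans an extreme ray of the feasible
cone of `P` at `x`. -/
def IsEdgeDirAt (A : Matrix (Fin mA) (Fin n) ℤ) (B : Matrix (Fin mB) (Fin n) ℤ)
    (d : Fin mB → ℤ) (x g : Fin n → ℝ) : Prop :=
  g ≠ 0 ∧ g ∈ feasCone A B d x ∧
    ∀ y ∈ feasCone A B d x, ∀ z ∈ feasCone A B d x, g = y + z →
      ∃ μ : ℝ, 0 ≤ μ ∧ y = μ • g

/-- A greatest-improvement augmentation at `x`. -/
def IsGIAug (A : Matrix (Fin mA) (Fin n) ℤ) (B : Matrix (Fin mB) (Fin n) ℤ)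
    (P : Set (Fin n → ℝ)) (c : Fin n → ℤ) (x g : Fin n → ℝ) (α : ℝ) : Prop :=
  g ∈ CAB A B ∧ IsMaxAug P x g α ∧
    ∀ (g' : Fin n → ℝ) (α' : ℝ), g' ∈ CAB A B → 0 < α' → x + α' • g' ∈ P →
      -(dotIC c (α' • g')) ≤ -(dotIC c (α • g))

/-
At a 0/1 vertex `x` of `P ⊆ [0,1]ⁿ` every feasible direction `z` points into the box, so
`zᵢ ≥ 0` where `xᵢ = 0` and `zᵢ ≤ 0` where `xᵢ = 1`: on the feasible cone the 1-norm is the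
linear functional `z ↦ ∑ᵢ (1 - 2xᵢ) zᵢ`. Its level set `‖z‖₁ = 1` is a compact base of the cone
whose extreme points are edge-directions, so by Krein–Milman the steepness `s` of `g` gives
`-cᵀz ≤ s‖z‖₁` on the whole cone. The greatest-improvement step stays in `[0,1]ⁿ`, hence
`‖α*g*‖₁ ≤ n`, while the maximal step along the edge ends at another 0/1 vertex, hence
`‖αg‖₁ ≥ 1` and `-cᵀ(αg) = s‖αg‖₁ ≥ s`.
-/

open Set Filter Topology Matrix

section ConeBase

variable {E : Type*} [AddCommGroup E] [Module ℝ E] {C : Set E}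

theorem inv_smul_mem_base (hC : ∀ t : ℝ, 0 ≤ t → ∀ z ∈ C, t • z ∈ C) (L : E →ₗ[ℝ] ℝ)
    {v : E} (hv : v ∈ C) (hLv : 0 < L v) : (L v)⁻¹ • v ∈ C ∩ {z | L z = 1} :=
  ⟨hC _ (inv_nonneg.2 hLv.le) v hv, by simp [inv_mul_cancel₀ hLv.ne']⟩

theorem exists_nonneg_smul_of_mem_extremePoints_base
    (hC : ∀ t : ℝ, 0 ≤ t → ∀ z ∈ C, t • z ∈ C) (L : E →ₗ[ℝ] ℝ)
    (hL : ∀ z ∈ C, z ≠ 0 → 0 < L z) {w : E}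
    (hw : w ∈ (C ∩ {z | L z = 1}).extremePoints ℝ) {y z : E} (hy : y ∈ C) (hz : z ∈ C)
    (hyz : w = y + z) : ∃ μ : ℝ, 0 ≤ μ ∧ y = μ • w := by
  obtain rfl | hy0 := eq_or_ne y 0
  · exact ⟨0, le_rfl, (zero_smul ℝ w).symm⟩
  obtain rfl | hz0 := eq_or_ne z 0
  · exact ⟨1, zero_le_one, by rw [one_smul, hyz, add_zero]⟩
  have hLy := hL y hy hy0
  have hLz := hL z hz hz0
  have hsum : L y + L z = 1 := by rw [← map_add, ← hyz]; exact hw.1.2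
  have hseg : w ∈ openSegment ℝ ((L y)⁻¹ • y) ((L z)⁻¹ • z) :=
    ⟨L y, L z, hLy, hLz, hsum, by simp [smul_smul, hLy.ne', hLz.ne', hyz]⟩
  refine ⟨L y, hLy.le, ?_⟩
  rw [← hw.2 (inv_smul_mem_base hC L hy hLy) (inv_smul_mem_base hC L hz hLz) hseg, smul_smul,
    mul_inv_cancel₀ hLy.ne', one_smul]

theorem exists_le_eq_add_smul_of_mem_openSegment {P : Set E} {x g : E} {α : ℝ}
    (hPC : ∀ p ∈ P, p - x ∈ C) (hC : ∀ t : ℝ, 0 ≤ t → ∀ z ∈ C, t • z ∈ C)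
    (hray : ∀ y ∈ C, ∀ z ∈ C, g = y + z → ∃ μ : ℝ, 0 ≤ μ ∧ y = μ • g) (hα : 0 < α)
    (hmax : ∀ ε : ℝ, 0 < ε → x + (α + ε) • g ∉ P) {p q : E} (hp : p ∈ P) (hq : q ∈ P)
    (hseg : x + α • g ∈ openSegment ℝ p q) : ∃ β ≤ α, p = x + β • g := by
  obtain ⟨a, b, ha, hb, hab, hsum⟩ := hseg
  have hdecomp : g = (α⁻¹ * a) • (p - x) + (α⁻¹ * b) • (q - x) := by
    have : a • (p - x) + b • (q - x) = α • g := by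
      rw [smul_sub, smul_sub, sub_add_sub_comm, hsum, ← add_smul, hab, one_smul,
        add_sub_cancel_left]
    rw [mul_smul, mul_smul, ← smul_add, this, smul_smul, inv_mul_cancel₀ hα.ne', one_smul]
  obtain ⟨μ, -, hμ⟩ := hray _ (hC _ (by positivity) _ (hPC p hp)) _
    (hC _ (by positivity) _ (hPC q hq)) hdecomp
  have hpx : p = x + (α * μ / a) • g := by
    have hne : α⁻¹ * a ≠ 0 := by positivity
    rw [← add_sub_cancel x p, ← inv_smul_smul₀ hne (p - x), hμ, smul_smul]
    congr 2
    field_simp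
  refine ⟨α * μ / a, not_lt.1 fun hlt => hmax _ (sub_pos.2 hlt) ?_, hpx⟩
  rwa [add_sub_cancel, ← hpx]

theorem add_smul_mem_extremePoints {P : Set E} {x g : E} {α : ℝ}
    (hPC : ∀ p ∈ P, p - x ∈ C) (hC : ∀ t : ℝ, 0 ≤ t → ∀ z ∈ C, t • z ∈ C)
    (hray : ∀ y ∈ C, ∀ z ∈ C, g = y + z → ∃ μ : ℝ, 0 ≤ μ ∧ y = μ • g) (hg : g ≠ 0)
    (hα : 0 < α) (hmem : x + α • g ∈ P) (hmax : ∀ ε : ℝ, 0 < ε → x + (α + ε) • g ∉ P) :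
    x + α • g ∈ P.extremePoints ℝ := by
  refine ⟨hmem, fun p hp q hq hseg => ?_⟩
  obtain ⟨β, hβ, rfl⟩ := exists_le_eq_add_smul_of_mem_openSegment hPC hC hray hα hmax hp hq hseg
  obtain ⟨β', hβ', rfl⟩ := exists_le_eq_add_smul_of_mem_openSegment hPC hC hray hα hmax hq hp
    (by rwa [openSegment_symm])
  obtain ⟨a, b, ha, hb, hab, hsum⟩ := hseg
  obtain rfl : b = 1 - a := by linarith
  have hcoef : a * β + (1 - a) * β' = α := by
    refine smul_left_injective ℝ hg (add_left_cancel (a := x) ?_)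
    rw [← hsum]
    module
  have : β = α := by nlinarith
  rw [this]

end ConeBase

section KreinMilman

variable {E : Type*} [AddCommGroup E] [Module ℝ E] [TopologicalSpace E] [T2Space E]
  [IsTopologicalAddGroup E] [ContinuousSMul ℝ E] [LocallyConvexSpace ℝ E]

theorem subset_of_extremePoints_subset {K S : Set E} (hK : IsCompact K) (hKc : Convex ℝ K)
    (hS : IsClosed S) (hSc : Convex ℝ S) (h : K.extremePoints ℝ ⊆ S) : K ⊆ S := by
  rw [← closure_convexHull_extremePoints hK hKc]
  exact hS.closure_subset_iff.2 (convexHull_min h hSc)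

theorem le_mul_of_forall_extremePoints_base_le {C : Set E} (hCc : Convex ℝ C)
    (hC : ∀ t : ℝ, 0 ≤ t → ∀ z ∈ C, t • z ∈ C) (L : E →ₗ[ℝ] ℝ)
    (hL : ∀ z ∈ C, z ≠ 0 → 0 < L z) (hK : IsCompact (C ∩ {z | L z = 1}))
    {f : E →ₗ[ℝ] ℝ} (hf : Continuous f) {s : ℝ}
    (hs : ∀ w ∈ (C ∩ {z | L z = 1}).extremePoints ℝ, f w ≤ s) {z : E} (hz : z ∈ C) :
    f z ≤ s * L z := by
  obtain rfl | hz0 := eq_or_ne z 0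
  · simp
  have hLz := hL z hz hz0
  have hKs : C ∩ {z | L z = 1} ⊆ {v | f v ≤ s} :=
    subset_of_extremePoints_subset hK (hCc.inter (convex_hyperplane L.isLinear 1))
      (isClosed_le hf continuous_const) (convex_halfSpace_le f.isLinear s) hs
  have := hKs (inv_smul_mem_base hC L hz hLz)
  change f _ ≤ s at this
  rwa [map_smul, smul_eq_mul, inv_mul_le_iff₀ hLz, mul_comm] at this

end KreinMilman

theorem dotIC_add (c : Fin n → ℤ) (x y : Fin n → ℝ) :
    dotIC c (x + y) = dotIC c x + dotIC c y :=
  dotProduct_add (rvec c) x y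

theorem dotIC_sub (c : Fin n → ℤ) (x y : Fin n → ℝ) :
    dotIC c (x - y) = dotIC c x - dotIC c y :=
  dotProduct_sub (rvec c) x y

theorem dotIC_smul (c : Fin n → ℤ) (t : ℝ) (x : Fin n → ℝ) :
    dotIC c (t • x) = t * dotIC c x :=
  dotProduct_smul t (rvec c) x

theorem norm1_nonneg (x : Fin n → ℝ) : 0 ≤ norm1 x :=
  Finset.sum_nonneg fun i _ => abs_nonneg (x i)

theorem abs_le_norm1 (x : Fin n → ℝ) (i : Fin n) : |x i| ≤ norm1 x :=
  Finset.single_le_sum (fun j _ => abs_nonneg (x j)) (Finset.mem_univ i)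

theorem norm1_pos {x : Fin n → ℝ} (hx : x ≠ 0) : 0 < norm1 x := by
  obtain ⟨i, hi⟩ := Function.ne_iff.1 hx
  exact (abs_pos.2 hi).trans_le (abs_le_norm1 x i)

theorem norm1_smul (t : ℝ) (x : Fin n → ℝ) : norm1 (t • x) = |t| * norm1 x := by
  simp [norm1, abs_mul, Finset.mul_sum]

theorem one_le_norm1_sub {u v : Fin n → ℝ} (hu : ∀ i, u i = 0 ∨ u i = 1)
    (hv : ∀ i, v i = 0 ∨ v i = 1) (huv : u ≠ v) : 1 ≤ norm1 (u - v) := by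
  obtain ⟨i, hi⟩ := Function.ne_iff.1 huv
  refine le_trans ?_ (abs_le_norm1 _ i)
  rcases hu i with h | h <;> rcases hv i with h' | h' <;> simp_all

theorem norm1_sub_le_of_mem_Icc {u v : Fin n → ℝ} (hu : u ∈ Icc 0 1) (hv : v ∈ Icc 0 1) :
    norm1 (u - v) ≤ n := by
  have hle : ∀ i, |(u - v) i| ≤ 1 := fun i => by
    have : u i ≤ 1 ∧ 0 ≤ v i ∧ 0 ≤ u i ∧ v i ≤ 1 := ⟨hu.2 i, hv.1 i, hu.1 i, hv.2 i⟩
    rw [Pi.sub_apply, abs_sub_le_iff]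
    constructor <;> linarith
  calc norm1 (u - v) ≤ ∑ _i : Fin n, (1 : ℝ) := Finset.sum_le_sum fun i _ => hle i
    _ = n := by simp

section Polytope

variable {A : Matrix (Fin mA) (Fin n) ℤ} {B : Matrix (Fin mB) (Fin n) ℤ} {b : Fin mA → ℤ}
  {d : Fin mB → ℤ}

theorem Pset_eq_inter_preimage :
    Pset A B b d = (rmat A).mulVecLin ⁻¹' {rvec b} ∩ (rmat B).mulVecLin ⁻¹' Iic (rvec d) :=
  rfl

theorem convex_Pset : Convex ℝ (Pset A B b d) := by
  rw [Pset_eq_inter_preimage]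
  exact ((convex_singleton _).linear_preimage _).inter ((convex_Iic _).linear_preimage _)

theorem isClosed_Pset : IsClosed (Pset A B b d) := by
  rw [Pset_eq_inter_preimage]
  exact (isClosed_singleton.preimage (LinearMap.continuous_of_finiteDimensional _)).inter
    (isClosed_Iic.preimage (LinearMap.continuous_of_finiteDimensional _))

theorem Pset_subset_Icc (hbdd : Bornology.IsBounded (Pset A B b d))
    (h01 : ∀ v ∈ (Pset A B b d).extremePoints ℝ, ∀ i, v i = 0 ∨ v i = 1) :
    Pset A B b d ⊆ Icc 0 1 := by
  refine subset_of_extremePoints_subset (Metric.isCompact_of_isClosed_isBounded isClosed_Pset hbdd)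
    convex_Pset isClosed_Icc (convex_Icc 0 1) fun v hv => ⟨fun i => ?_, fun i => ?_⟩ <;>
  rcases h01 v hv i with h | h <;> simp [h]

variable {x : Fin n → ℝ}

theorem isClosed_feasCone : IsClosed (feasCone A B d x) := by
  have hB : Continuous fun z : Fin n → ℝ => rmat B *ᵥ z :=
    (rmat B).mulVecLin.continuous_of_finiteDimensional
  have : feasCone A B d x = {z | rmat A *ᵥ z = 0} ∩
      ⋂ i ∈ {i | (rmat B *ᵥ x) i = d i}, {z | (rmat B *ᵥ z) i ≤ 0} := by
    ext z
    simp [feasCone]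
  rw [this]
  exact (isClosed_eq (rmat A).mulVecLin.continuous_of_finiteDimensional continuous_const).inter
    (isClosed_biInter fun i _ => isClosed_le ((continuous_apply i).comp hB) continuous_const)

theorem smul_mem_feasCone {t : ℝ} (ht : 0 ≤ t) {z : Fin n → ℝ} (hz : z ∈ feasCone A B d x) :
    t • z ∈ feasCone A B d x := by
  refine ⟨by rw [mulVec_smul, hz.1, smul_zero], fun i hi => ?_⟩
  rw [mulVec_smul, Pi.smul_apply, smul_eq_mul]
  exact mul_nonpos_of_nonneg_of_nonpos ht (hz.2 i hi)

theorem add_mem_feasCone {y z : Fin n → ℝ} (hy : y ∈ feasCone A B d x)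
    (hz : z ∈ feasCone A B d x) : y + z ∈ feasCone A B d x := by
  refine ⟨by rw [mulVec_add, hy.1, hz.1, add_zero], fun i hi => ?_⟩
  rw [mulVec_add, Pi.add_apply]
  exact add_nonpos (hy.2 i hi) (hz.2 i hi)

theorem convex_feasCone : Convex ℝ (feasCone A B d x) :=
  fun _ hy _ hz _ _ ha hb _ => add_mem_feasCone (smul_mem_feasCone ha hy) (smul_mem_feasCone hb hz)

theorem sub_mem_feasCone {p : Fin n → ℝ} (hx : x ∈ Pset A B b d) (hp : p ∈ Pset A B b d) :
    p - x ∈ feasCone A B d x := by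
  refine ⟨by rw [mulVec_sub, hp.1, hx.1, sub_self], fun i hi => ?_⟩
  rw [mulVec_sub, Pi.sub_apply, hi, sub_nonpos]
  exact hp.2 i

theorem exists_pos_add_smul_mem_Pset (hx : x ∈ Pset A B b d) {z : Fin n → ℝ}
    (hz : z ∈ feasCone A B d x) : ∃ ε : ℝ, 0 < ε ∧ x + ε • z ∈ Pset A B b d := by
  have hrow : ∀ i, ∀ᶠ ε in 𝓝[>] (0 : ℝ), (rmat B *ᵥ x) i + ε * (rmat B *ᵥ z) i ≤ d i := by
    intro i
    rcases (hx.2 i).eq_or_lt with htight | hslack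
    · filter_upwards [self_mem_nhdsWithin] with ε (hε : 0 < ε)
      nlinarith [hz.2 i htight]
    · have hlim : Tendsto (fun ε : ℝ => (rmat B *ᵥ x) i + ε * (rmat B *ᵥ z) i) (𝓝[>] 0)
          (𝓝 ((rmat B *ᵥ x) i)) :=
        ((continuous_const.add (continuous_id.mul continuous_const)).tendsto' 0 _
          (by simp)).mono_left nhdsWithin_le_nhds
      exact (hlim.eventually (gt_mem_nhds hslack)).mono fun _ => le_of_lt
  obtain ⟨ε, hB, hε⟩ := ((eventually_all.2 hrow).and self_mem_nhdsWithin).exists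
  refine ⟨ε, hε, by rw [mulVec_add, mulVec_smul, hz.1, smul_zero, add_zero, hx.1], fun i => ?_⟩
  simpa [mulVec_add, mulVec_smul] using hB i

theorem abs_eq_mul_of_add_mul_mem_Icc {a t ε : ℝ} (ha : a = 0 ∨ a = 1) (hε : 0 < ε)
    (h : a + ε * t ∈ Icc 0 1) : |t| = (1 - 2 * a) * t := by
  rcases ha with rfl | rfl
  · rw [abs_of_nonneg (by nlinarith [h.1])]
    ring
  · rw [abs_of_nonpos (by nlinarith [h.2])]
    ring

theorem norm1_eq_dotProduct_of_mem_feasCone (hbox : Pset A B b d ⊆ Icc 0 1)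
    (hx : x ∈ Pset A B b d) (hx01 : ∀ i, x i = 0 ∨ x i = 1) {z : Fin n → ℝ}
    (hz : z ∈ feasCone A B d x) : norm1 z = (1 - 2 • x) ⬝ᵥ z := by
  obtain ⟨ε, hε, hmem⟩ := exists_pos_add_smul_mem_Pset hx hz
  refine Finset.sum_congr rfl fun i _ => ?_
  have hi : x i + ε * z i ∈ Icc 0 1 := ⟨(hbox hmem).1 i, (hbox hmem).2 i⟩
  simpa using abs_eq_mul_of_add_mul_mem_Icc (hx01 i) hε hi

theorem isCompact_feasCone_inter_level (L : (Fin n → ℝ) →ₗ[ℝ] ℝ)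
    (hL : ∀ z ∈ feasCone A B d x, L z = norm1 z) :
    IsCompact (feasCone A B d x ∩ {z | L z = 1}) := by
  refine Metric.isCompact_of_isClosed_isBounded
    (isClosed_feasCone.inter (isClosed_eq L.continuous_of_finiteDimensional continuous_const))
    (Metric.isBounded_closedBall (x := 0) (r := 1) |>.subset fun z hz => ?_)
  rw [Metric.mem_closedBall, dist_zero_right, pi_norm_le_iff_of_nonneg zero_le_one]
  intro i
  rw [Real.norm_eq_abs, ← hz.2, hL z hz.1]
  exact abs_le_norm1 z i

theorem neg_dotIC_le_mul_norm1_of_forall_isEdgeDirAt (c : Fin n → ℤ)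
    (hbdd : Bornology.IsBounded (Pset A B b d))
    (h01 : ∀ v ∈ (Pset A B b d).extremePoints ℝ, ∀ i, v i = 0 ∨ v i = 1)
    (hx : x ∈ (Pset A B b d).extremePoints ℝ) {s : ℝ}
    (hs : ∀ g : Fin n → ℝ, IsEdgeDirAt A B d x g → -(dotIC c g) / norm1 g ≤ s)
    {z : Fin n → ℝ} (hz : z ∈ feasCone A B d x) : -(dotIC c z) ≤ s * norm1 z := by
  set L : (Fin n → ℝ) →ₗ[ℝ] ℝ := dotProductBilin ℝ ℝ (1 - 2 • x)
  have hLnorm : ∀ z ∈ feasCone A B d x, L z = norm1 z := fun z hz =>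
    (norm1_eq_dotProduct_of_mem_feasCone (Pset_subset_Icc hbdd h01) hx.1 (h01 x hx) hz).symm
  have hLpos : ∀ z ∈ feasCone A B d x, z ≠ 0 → 0 < L z := fun z hz hz0 =>
    hLnorm z hz ▸ norm1_pos hz0
  have hsmul : ∀ t : ℝ, 0 ≤ t → ∀ z ∈ feasCone A B d x, t • z ∈ feasCone A B d x :=
    fun t ht z hz => smul_mem_feasCone ht hz
  have hedge : ∀ w ∈ (feasCone A B d x ∩ {z | L z = 1}).extremePoints ℝ, IsEdgeDirAt A B d x w :=
    fun w hw => ⟨fun h0 => by simpa [h0] using hw.1.2, hw.1.1,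
      fun y hy z hz => exists_nonneg_smul_of_mem_extremePoints_base hsmul L hLpos hw hy hz⟩
  have := le_mul_of_forall_extremePoints_base_le convex_feasCone hsmul L hLpos
    (isCompact_feasCone_inter_level L hLnorm) (f := -dotProductBilin ℝ ℝ (rvec c))
    (LinearMap.continuous_of_finiteDimensional _)
    (fun w hw => by
      have hs' := hs w (hedge w hw)
      rwa [← hLnorm w hw.1.1, hw.1.2, div_one] at hs') hz
  rwa [hLnorm z hz] at this

end Polytope

theorem steepest_edge_n_approximation_general
    (A : Matrix (Fin mA) (Fin n) ℤ) (B : Matrix (Fin mB) (Fin n) ℤ)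
    (b : Fin mA → ℤ) (d : Fin mB → ℤ) (c : Fin n → ℤ)
    (hbdd : Bornology.IsBounded (Pset A B b d))
    (h01 : ∀ v ∈ Set.extremePoints ℝ (Pset A B b d), ∀ i, v i = 0 ∨ v i = 1)
    (x : Fin n → ℝ) (hx : x ∈ Set.extremePoints ℝ (Pset A B b d))
    (hnonopt : ∃ y ∈ Pset A B b d, dotIC c y < dotIC c x)
    (g : Fin n → ℝ) (α : ℝ)
    (hedge : IsEdgeDirAt A B d x g)
    (hsteepest : ∀ g' : Fin n → ℝ, IsEdgeDirAt A B d x g' →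
      -(dotIC c g') / norm1 g' ≤ -(dotIC c g) / norm1 g)
    (hmax : IsMaxAug (Pset A B b d) x g α)
    (gs : Fin n → ℝ) (αs : ℝ)
    (hgia : IsGIAug A B (Pset A B b d) c x gs αs) :
    (1 / (n : ℝ)) * (dotIC c x - dotIC c (x + αs • gs)) ≤
      dotIC c x - dotIC c (x + α • g) := by
  set s := -(dotIC c g) / norm1 g with hs_def
  have hcone : ∀ z ∈ feasCone A B d x, -(dotIC c z) ≤ s * norm1 z := fun z hz =>
    neg_dotIC_le_mul_norm1_of_forall_isEdgeDirAt c hbdd h01 hx hsteepest hz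
  have hs : 0 ≤ s := by
    obtain ⟨y, hy, hyx⟩ := hnonopt
    have := hcone _ (sub_mem_feasCone hx.1 hy)
    rw [dotIC_sub] at this
    nlinarith [norm1_nonneg (y - x)]
  have hvertex : x + α • g ∈ (Pset A B b d).extremePoints ℝ :=
    add_smul_mem_extremePoints (fun p hp => sub_mem_feasCone hx.1 hp)
      (fun t ht z hz => smul_mem_feasCone ht hz) hedge.2.2 hedge.1 hmax.1 hmax.2.1 hmax.2.2
  have hedge_len : 1 ≤ norm1 (α • g) := by
    simpa using one_le_norm1_sub (h01 _ hvertex) (h01 x hx)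
      (by simpa using smul_ne_zero hmax.1.ne' hedge.1)
  have hedge_gain : -(dotIC c (α • g)) = s * norm1 (α • g) := by
    rw [dotIC_smul, norm1_smul, abs_of_pos hmax.1, hs_def]
    field_simp [(norm1_pos hedge.1).ne']
  have hgi_gain : -(dotIC c (αs • gs)) ≤ s * n := by
    have hP := hgia.2.1.2.1
    refine (hcone _ (by simpa using sub_mem_feasCone hx.1 hP)).trans
      (mul_le_mul_of_nonneg_left ?_ hs)
    simpa using norm1_sub_le_of_mem_Icc (Pset_subset_Icc hbdd h01 hP)
      (Pset_subset_Icc hbdd h01 hx.1)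
  simp only [dotIC_add, sub_add_cancel_left]
  calc 1 / (n : ℝ) * -dotIC c (αs • gs) ≤ 1 / n * (s * n) :=
        mul_le_mul_of_nonneg_left hgi_gain (by positivity)
    _ = s * (n / n) := by ring
    _ ≤ s := mul_le_of_le_one_right hs (div_self_le_one _)
    _ ≤ s * norm1 (α • g) := le_mul_of_one_le_right hs hedge_len
    _ = -dotIC c (α • g) := hedge_gain.symm

/-- Theorem 7 of the paper: on a 0/1-LP, a maximal augmentation along a
steepest edge at a vertex is an `n`-approximate greatest-improvement augmentation. -/
theorem steepest_edge_n_approximation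
    (A : Matrix (Fin mA) (Fin n) ℤ) (B : Matrix (Fin mB) (Fin n) ℤ)
    (b : Fin mA → ℤ) (d : Fin mB → ℤ) (c : Fin n → ℤ)
    (hmB : 1 ≤ mB)
    (hA : (rmat A).rank = mA)
    (hAB : (rmat (Matrix.fromRows A B)).rank = n)
    (hbdd : Bornology.IsBounded (Pset A B b d))
    (h01 : ∀ v ∈ Set.extremePoints ℝ (Pset A B b d), ∀ i, v i = 0 ∨ v i = 1)
    (x : Fin n → ℝ) (hx : x ∈ Set.extremePoints ℝ (Pset A B b d))
    (hnonopt : ∃ y ∈ Pset A B b d, dotIC c y < dotIC c x)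
    (g : Fin n → ℝ) (α : ℝ)
    (hedge : IsEdgeDirAt A B d x g)
    (hsteepest : ∀ g' : Fin n → ℝ, IsEdgeDirAt A B d x g' →
      -(dotIC c g') / norm1 g' ≤ -(dotIC c g) / norm1 g)
    (hmax : IsMaxAug (Pset A B b d) x g α)
    (gs : Fin n → ℝ) (αs : ℝ)
    (hgia : IsGIAug A B (Pset A B b d) c x gs αs) :
    (1 / (n : ℝ)) * (dotIC c x - dotIC c (x + αs • gs)) ≤
      dotIC c x - dotIC c (x + α • g) :=
  steepest_edge_n_approximation_general A B b d c hbdd h01 x hx hnonopt g α hedge hsteepest hmax gs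
    αs hgia
end
end

section
/- Let P ⊆ ℝⁿ be a 0/1 polytope, let v be a vertex of P, and let F be a facet of P with v ∉ F. Then ‖y − v‖₁ ≥ 1 for every y ∈ F. Consequently, the minimum 1-norm distance ω₁ from any vertex of P to any facet not containing it satisfies ω₁ ≥ 1, the maximum 1-norm distance M₁ between two vertices of P satisfies M₁ ≤ n, and hence M₁/ω₁ ≤ n. -/
set_option maxHeartbeats 800000


noncomputable section

variable {n : ℕ}

/-- An (exposed) face of `P`: the set of minimizers over `P` of some linear functional. -/
def IsFace (P F : Set (Fin n → ℝ)) : Prop :=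
  ∃ w : Fin n → ℝ, F = {x ∈ P | ∀ y ∈ P, ∑ i, w i * x i ≤ ∑ i, w i * y i}

/-- The (affine) dimension of a subset of `ℝⁿ`. -/
def dimS (S : Set (Fin n → ℝ)) : ℕ := Module.finrank ℝ (affineSpan ℝ S).direction

/-- A facet of `P`: a face of dimension `dim P − 1`. -/
def IsFacet (P F : Set (Fin n → ℝ)) : Prop := IsFace P F ∧ dimS F + 1 = dimS P

/-- `ω₁`: the minimum 1-norm distance from a vertex of `P` to a point on a facet of `P`
not containing that vertex. -/
def omega1 (P : Set (Fin n → ℝ)) : ℝ :=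
  sInf {r : ℝ | ∃ v ∈ Set.extremePoints ℝ P, ∃ F : Set (Fin n → ℝ),
        IsFacet P F ∧ v ∉ F ∧ ∃ f ∈ F, r = norm1 (v - f)}

/-- `M₁`: the maximum 1-norm distance between two vertices of `P`. -/
def M1 (P : Set (Fin n → ℝ)) : ℝ :=
  sSup {r : ℝ | ∃ v₁ ∈ Set.extremePoints ℝ P, ∃ v₂ ∈ Set.extremePoints ℝ P,
        r = norm1 (v₁ - v₂)}

lemma key_facet_dist (P : Set (Fin n → ℝ))
    (hconv : Convex ℝ P) (hcpt : IsCompact P)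
    (h01 : ∀ u ∈ Set.extremePoints ℝ P, ∀ i, u i = 0 ∨ u i = 1)
    (v : Fin n → ℝ) (hv : v ∈ Set.extremePoints ℝ P)
    (F : Set (Fin n → ℝ)) (hface : IsFace P F) (hvF : v ∉ F) :
    ∀ y ∈ F, 1 ≤ norm1 (y - v) := by
  obtain ⟨w, hFw⟩ := hface
  intro y hy
  -- the continuous linear functional x ↦ -∑ w i * x i
  set l₀ : (Fin n → ℝ) →ₗ[ℝ] ℝ := -(∑ i, w i • LinearMap.proj i) with hl₀
  set l : (Fin n → ℝ) →L[ℝ] ℝ := LinearMap.toContinuousLinearMap l₀ with hl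
  have hlval : ∀ x, l x = -∑ i, w i * x i := by
    intro x
    simp [hl, hl₀, LinearMap.sum_apply, smul_eq_mul]
  have hexp : IsExposed ℝ P F := by
    intro _
    refine ⟨l, ?_⟩
    rw [hFw]
    ext x
    simp only [Set.mem_setOf_eq, hlval]
    constructor
    · rintro ⟨hxP, hmin⟩
      exact ⟨hxP, fun z hz => neg_le_neg (hmin z hz)⟩
    · rintro ⟨hxP, hmax⟩
      exact ⟨hxP, fun z hz => by linarith [hmax z hz]⟩
  have hFP : F ⊆ P := by rw [hFw]; exact fun x hx => hx.1
  have hFclosed : IsClosed F := hexp.isClosed hcpt.isClosed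
  have hFcpt : IsCompact F := hcpt.of_isClosed_subset hFclosed hFP
  have hFconv : Convex ℝ F := hexp.convex hconv
  have hext : IsExtreme ℝ P F := hexp.isExtreme
  -- the auxiliary affine functional
  set g : (Fin n → ℝ) → ℝ := fun x => ∑ i, (if v i = 0 then x i else 1 - x i) with hg
  set C : Set (Fin n → ℝ) := {x | 1 ≤ g x} with hC
  have hCclosed : IsClosed C := by
    have hgc : Continuous g := by
      apply continuous_finset_sum
      intro i _
      by_cases h : v i = 0 <;> simp only [h, if_true, if_false, one_ne_zero] <;> fun_prop
    exact isClosed_le continuous_const hgc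
  have hCconv : Convex ℝ C := by
    intro x hx z hz a b ha hb hab
    have hcomb : g (a • x + b • z) = a * g x + b * g z := by
      simp only [hg, Finset.mul_sum, ← Finset.sum_add_distrib]
      refine Finset.sum_congr rfl fun i _ => ?_
      by_cases h : v i = 0
      · simp only [h, if_true, Pi.add_apply, Pi.smul_apply, smul_eq_mul]
      · simp only [h, if_false, Pi.add_apply, Pi.smul_apply, smul_eq_mul]
        linarith
    simp only [hC, Set.mem_setOf_eq] at hx hz ⊢
    rw [hcomb]
    have h1 := mul_le_mul_of_nonneg_left hx ha
    have h2 := mul_le_mul_of_nonneg_left hz hb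
    linarith
  have hEC : Set.extremePoints ℝ F ⊆ C := by
    intro u hu
    have huP : u ∈ Set.extremePoints ℝ P := hext.extremePoints_subset_extremePoints hu
    have huF : u ∈ F := extremePoints_subset hu
    have hune : u ≠ v := fun h => hvF (h ▸ huF)
    obtain ⟨i, hi⟩ : ∃ i, u i ≠ v i := by
      by_contra h
      push_neg at h
      exact hune (funext h)
    have hterm1 : (1:ℝ) ≤ (if v i = 0 then u i else 1 - u i) := by
      rcases h01 u huP i with hu0 | hu1 <;> rcases h01 v hv i with hv0 | hv1 <;>
        simp_all
    have hnonneg : ∀ j ∈ Finset.univ, (0:ℝ) ≤ (if v j = 0 then u j else 1 - u j) := by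
      intro j _
      rcases h01 u huP j with h' | h' <;> by_cases h : v j = 0 <;>
        simp [h, h'] <;> norm_num
    have := Finset.single_le_sum hnonneg (Finset.mem_univ i)
    simp only [hC, Set.mem_setOf_eq, hg]
    linarith
  have hKM : closure (convexHull ℝ (Set.extremePoints ℝ F)) = F :=
    closure_convexHull_extremePoints hFcpt hFconv
  have hyC : y ∈ C := by
    have : F ⊆ C := by
      rw [← hKM]
      exact closure_minimal (convexHull_min hEC hCconv) hCclosed
    exact this hy
  have hge : g y ≤ norm1 (y - v) := by
    apply Finset.sum_le_sum
    intro i _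
    rcases h01 v hv i with hv0 | hv1
    · simp only [hv0, if_true, Pi.sub_apply, sub_zero]
      exact le_abs_self _
    · have hne : ¬ (v i = 0) := by rw [hv1]; norm_num
      rw [if_neg hne, Pi.sub_apply, hv1, abs_sub_comm]
      exact le_abs_self _
  exact le_trans hyC hge

/-- in a 0/1 polytope, every point of a facet not containing a given
vertex `v` is at 1-norm distance at least 1 from `v`; consequently `ω₁ ≥ 1`, `M₁ ≤ n`
and `M₁/ω₁ ≤ n`. -/
theorem facet_distance_bounds
    (P : Set (Fin n → ℝ))
    (hconv : Convex ℝ P) (hcpt : IsCompact P)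
    (h01 : ∀ u ∈ Set.extremePoints ℝ P, ∀ i, u i = 0 ∨ u i = 1)
    (v : Fin n → ℝ) (hv : v ∈ Set.extremePoints ℝ P)
    (F : Set (Fin n → ℝ)) (hF : IsFacet P F) (hvF : v ∉ F) :
    (∀ y ∈ F, 1 ≤ norm1 (y - v)) ∧
    1 ≤ omega1 P ∧
    M1 P ≤ n ∧
    M1 P / omega1 P ≤ n := by
  have hmain := key_facet_dist P hconv hcpt h01 v hv F hF.1 hvF
  have hvP : v ∈ P := extremePoints_subset hv
  -- symmetry of norm1 distance
  have hsymm : ∀ x z : Fin n → ℝ, norm1 (x - z) = norm1 (z - x) := by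
    intro x z
    unfold norm1
    exact Finset.sum_congr rfl fun i _ => by rw [Pi.sub_apply, Pi.sub_apply, abs_sub_comm]
  -- F is nonempty
  obtain ⟨w, hFw⟩ := hF.1
  have hFne : F.Nonempty := by
    have hcont : ContinuousOn (fun x : Fin n → ℝ => ∑ i, w i * x i) P := by
      apply Continuous.continuousOn
      apply continuous_finset_sum
      intro i _
      fun_prop
    obtain ⟨x, hxP, hxmin⟩ := hcpt.exists_isMinOn ⟨v, hvP⟩ hcont
    exact ⟨x, by rw [hFw]; exact ⟨hxP, fun z hz => hxmin hz⟩⟩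
  obtain ⟨f, hfF⟩ := hFne
  -- the omega1 set is nonempty and bounded below by 1
  have homega_lb : ∀ r ∈ {r : ℝ | ∃ v ∈ Set.extremePoints ℝ P, ∃ F : Set (Fin n → ℝ),
        IsFacet P F ∧ v ∉ F ∧ ∃ f ∈ F, r = norm1 (v - f)}, 1 ≤ r := by
    rintro r ⟨v', hv', F', hF', hv'F', f', hf', rfl⟩
    rw [hsymm]
    exact key_facet_dist P hconv hcpt h01 v' hv' F' hF'.1 hv'F' f' hf'
  have homega_ne : (norm1 (v - f)) ∈ {r : ℝ | ∃ v ∈ Set.extremePoints ℝ P,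
      ∃ F : Set (Fin n → ℝ), IsFacet P F ∧ v ∉ F ∧ ∃ f ∈ F, r = norm1 (v - f)} :=
    ⟨v, hv, F, hF, hvF, f, hfF, rfl⟩
  have homega : 1 ≤ omega1 P := le_csInf ⟨_, homega_ne⟩ homega_lb
  -- M1 bound
  have hMub : ∀ r ∈ {r : ℝ | ∃ v₁ ∈ Set.extremePoints ℝ P, ∃ v₂ ∈ Set.extremePoints ℝ P,
        r = norm1 (v₁ - v₂)}, r ≤ (n : ℝ) := by
    rintro r ⟨v₁, hv₁, v₂, hv₂, rfl⟩
    unfold norm1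
    calc ∑ i, |(v₁ - v₂) i| ≤ ∑ _i : Fin n, (1:ℝ) := by
          apply Finset.sum_le_sum
          intro i _
          rw [Pi.sub_apply]
          rcases h01 v₁ hv₁ i with h1 | h1 <;> rcases h01 v₂ hv₂ i with h2 | h2 <;>
            rw [h1, h2] <;> norm_num
      _ = (n : ℝ) := by simp
  have hM : M1 P ≤ (n : ℝ) := Real.sSup_le hMub (Nat.cast_nonneg n)
  have hM0 : 0 ≤ M1 P := by
    have h0mem : (0:ℝ) ∈ {r : ℝ | ∃ v₁ ∈ Set.extremePoints ℝ P,
        ∃ v₂ ∈ Set.extremePoints ℝ P, r = norm1 (v₁ - v₂)} :=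
      ⟨v, hv, v, hv, by simp [norm1]⟩
    exact le_csSup ⟨(n : ℝ), hMub⟩ h0mem
  refine ⟨hmain, homega, hM, ?_⟩
  calc M1 P / omega1 P ≤ M1 P := div_le_self hM0 homega
    _ ≤ (n : ℝ) := hM
end
end
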